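/- arXiv:1903.06977 — 2 statements merged into one kernel-verified Lean document; each statement's English description precedes it below -/
import Mathlib

section
/- Let (X, μ, T) be a measure-preserving dynamical system with μ a probability measure, and let (B_m)_{m≥1} be measurable targets with μ(B_m) → 0 and μ(B_m) > 0 for all m. Assume that for every t ∈ ℝ, G_{B_m}(t) := limsup_{m→∞} μ({x ∈ X : τ_{B_m}(x) ≤ t/μ(B_m)}) < 1. If μ(E_ah) = 1, then for every c ∈ ℝ we have μ(B_m) ≥ c/m for all sufficiently large m. -/
open MeasureTheory Filter Set
open scoped ENNReal

/-- The set of eventually always hitting points: there is `m₀` such that for every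
`m ≥ m₀` the orbit segment `x, T x, …, T^[m-1] x` meets `B m`. -/
def eahSet {X : Type*} (T : X → X) (B : ℕ → Set X) : Set X :=
  {x | ∃ m₀ : ℕ, ∀ k : ℕ, m₀ ≤ k → ∃ i : ℕ, i < k ∧ T^[i] x ∈ B k}

/-- The set of points whose first hitting time to `E` is at most `s`, i.e.
`{x : τ_E(x) ≤ s}` where `τ_E(x) = inf {i ≥ 1 : T^i x ∈ E}`. -/
def hitBy {X : Type*} (T : X → X) (E : Set X) (s : ℝ) : Set X :=
  {x | ∃ i : ℕ, 1 ≤ i ∧ (i : ℝ) ≤ s ∧ T^[i] x ∈ E}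

open scoped Topology

/-!
The eventually always hitting set is the increasing union of the sets `alwaysHitsFrom T B m₀`,
so if it has full measure, some `alwaysHitsFrom T B m₀` has measure close to `1`. If
`μ (B m) < c / m` for infinitely many `m`, then for such `m ≥ m₀` every point of
`alwaysHitsFrom T B m₀` enters `B m` before time `m ≤ c / μ (B m)`, so it lies in `B m` or
in `{τ_{B m} ≤ c / μ (B m)}`. As `μ (B m) → 0`, this bounds its measure by `G(c) < 1` in the limit.
-/

section Hitting

variable {X : Type*} (T : X → X) (B : ℕ → Set X)

def alwaysHitsFrom (m₀ : ℕ) : Set X :=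
  {x | ∀ k, m₀ ≤ k → ∃ i < k, T^[i] x ∈ B k}

lemma monotone_alwaysHitsFrom : Monotone (alwaysHitsFrom T B) :=
  fun _ _ h _ hx k hk => hx k (h.trans hk)

lemma eahSet_eq_iUnion_alwaysHitsFrom : eahSet T B = ⋃ m₀, alwaysHitsFrom T B m₀ := by
  ext x
  simp [eahSet, alwaysHitsFrom]

variable {T B}

lemma mem_union_hitBy_of_iterate_mem {E : Set X} {x : X} {i : ℕ} {s : ℝ}
    (hx : T^[i] x ∈ E) (hi : (i : ℝ) ≤ s) : x ∈ E ∪ hitBy T E s := by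
  rcases Nat.eq_zero_or_pos i with rfl | hi₀
  · exact Or.inl hx
  · exact Or.inr ⟨i, hi₀, hi, hx⟩

lemma alwaysHitsFrom_subset_union_hitBy {m₀ m : ℕ} (hm : m₀ ≤ m) {s : ℝ} (hms : (m : ℝ) ≤ s) :
    alwaysHitsFrom T B m₀ ⊆ B m ∪ hitBy T (B m) s := fun _ hx =>
  let ⟨_, him, hi⟩ := hx m hm
  mem_union_hitBy_of_iterate_mem hi ((Nat.cast_le.mpr him.le).trans hms)

end Hitting

lemma le_div_of_lt_div {a b c : ℝ} (ha : 0 < a) (hb : 0 ≤ b) (h : a < c / b) : b ≤ c / a := by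
  rcases hb.eq_or_lt with rfl | hb
  · rw [div_zero] at h
    exact absurd ha h.not_gt
  · exact ((lt_div_comm₀ ha hb).mp h).le

section Measure

variable {X : Type*} [MeasurableSpace X] (μ : Measure X) (T : X → X) (B : ℕ → Set X)

lemma tendsto_measure_alwaysHitsFrom :
    Tendsto (fun m₀ => μ (alwaysHitsFrom T B m₀)) atTop (𝓝 (μ (eahSet T B))) := by
  rw [eahSet_eq_iUnion_alwaysHitsFrom]
  exact tendsto_measure_iUnion_atTop (monotone_alwaysHitsFrom T B)

variable {μ T B}

lemma measure_alwaysHitsFrom_le [IsFiniteMeasure μ] {m₀ m : ℕ} (hm : m₀ ≤ m) {c : ℝ}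
    (hpos : 0 < μ (B m)) (hsmall : μ (B m) < ENNReal.ofReal (c / m)) :
    μ (alwaysHitsFrom T B m₀) ≤ μ (B m) + μ (hitBy T (B m) (c / (μ (B m)).toReal)) := by
  have hfin : μ (B m) ≠ ∞ := measure_ne_top μ _
  have hms : (m : ℝ) ≤ c / (μ (B m)).toReal :=
    le_div_of_lt_div (ENNReal.toReal_pos hpos.ne' hfin) m.cast_nonneg
      ((ENNReal.lt_ofReal_iff_toReal_lt hfin).mp hsmall)
  calc μ (alwaysHitsFrom T B m₀) ≤ μ (B m ∪ hitBy T (B m) (c / (μ (B m)).toReal)) :=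
        measure_mono (alwaysHitsFrom_subset_union_hitBy hm hms)
    _ ≤ _ := measure_union_le _ _

end Measure

theorem eah_full_necessary_HTS_general {X : Type*} [MeasurableSpace X]
    (μ : Measure X) [IsProbabilityMeasure μ] (T : X → X)
    (B : ℕ → Set X)
    (hpos : ∀ m, 0 < μ (B m))
    (hlim : Tendsto (fun m => μ (B m)) atTop (nhds 0))
    (hG : ∀ t : ℝ,
      Filter.limsup (fun m : ℕ => μ (hitBy T (B m) (t / (μ (B m)).toReal))) atTop < 1)
    (hfull : μ (eahSet T B) = 1) :
    ∀ c : ℝ, ∀ᶠ m : ℕ in atTop, ENNReal.ofReal (c / m) ≤ μ (B m) := by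
  intro c
  by_contra hbad
  set f : ℕ → ℝ≥0∞ := fun m => μ (hitBy T (B m) (c / (μ (B m)).toReal))
  have hlimsup : limsup (fun m => μ (B m) + f m) atTop < 1 :=
    (ENNReal.limsup_add_of_left_tendsto_zero hlim f).trans_lt (hG c)
  obtain ⟨b, hb, hb₁⟩ := exists_between hlimsup
  obtain ⟨m₀, hm₀⟩ : ∃ m₀, b < μ (alwaysHitsFrom T B m₀) :=
    ((tendsto_measure_alwaysHitsFrom μ T B).eventually (lt_mem_nhds (hfull ▸ hb₁))).exists
  obtain ⟨m, hsmall, hm, hmb⟩ := ((not_eventually.mp hbad).and_eventually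
    ((eventually_ge_atTop m₀).and (eventually_lt_of_limsup_lt hb))).exists
  exact (hm₀.trans_le (measure_alwaysHitsFrom_le hm (hpos m) (not_le.mp hsmall))).not_gt hmb

/-- For a probability-measure-preserving system with targets of positive measure
tending to zero, assume that for every `t ∈ ℝ`,
`G(t) = limsup_m μ {x : τ_{B_m}(x) ≤ t / μ(B_m)} < 1`. If the set of eventually
always hitting points has full measure, then for every `c ∈ ℝ` we have
`μ (B m) ≥ c / m` for all sufficiently large `m`. -/
theorem eah_full_necessary_HTS {X : Type*} [MeasurableSpace X]
    (μ : Measure X) [IsProbabilityMeasure μ] (T : X → X)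
    (hT : MeasurePreserving T μ μ)
    (B : ℕ → Set X) (hmeas : ∀ m, MeasurableSet (B m))
    (hpos : ∀ m, 0 < μ (B m))
    (hlim : Tendsto (fun m => μ (B m)) atTop (nhds 0))
    (hG : ∀ t : ℝ,
      Filter.limsup (fun m : ℕ => μ (hitBy T (B m) (t / (μ (B m)).toReal))) atTop < 1)
    (hfull : μ (eahSet T B) = 1) :
    ∀ c : ℝ, ∀ᶠ m : ℕ in atTop, ENNReal.ofReal (c / m) ≤ μ (B m) :=
  eah_full_necessary_HTS_general μ T B hpos hlim hG hfull
end

section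
/- Let (X, μ, T) be an ergodic measure-preserving dynamical system with μ a probability measure, and let (B_m)_{m≥1} be a nested sequence of measurable targets with μ(B_m) → 0 and μ(B_m) > 0 for all m. Assume that for every t ∈ ℝ, G_{B_m}(t) := limsup_{m→∞} μ({x ∈ X : τ_{B_m}(x) ≤ t/μ(B_m)}) < 1. If there exists c ∈ ℝ such that μ(B_m) ≤ c/m for infinitely many m, then μ(E_ah) = 0. -/
open MeasureTheory Filter Set
open scoped ENNReal

/-!
Since the targets are nested and shrink to a null set, almost every point of `E_ah` leaves the
targets at some time, so its early hits can be taken at positive times and `E_ah` is a.e. contained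
in `T⁻¹ E_ah`; by ergodicity `μ(E_ah)` is `0` or `1`. On the other hand, along the infinitely
many `m` with `μ(B_m) ≤ c/m`, every point of `E_ah` (eventually) hits `B_m` within `m ≤ c/μ(B_m)`
steps, so lies in `B_m ∪ {τ_{B_m} ≤ c/μ(B_m)}`, whose measure is eventually at most some
`η < 1` because `μ(B_m) → 0` and `G(c) < 1`. Hence `μ(E_ah) ≤ η < 1`.
-/

theorem Ergodic.measure_eq_zero_of_ae_le_preimage {X : Type*} [MeasurableSpace X]
    {μ : Measure X} [IsProbabilityMeasure μ] {f : X → X} {s : Set X} (hf : Ergodic f μ)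
    (hs : NullMeasurableSet s μ) (hs' : s ≤ᵐ[μ] f ⁻¹' s) (h1 : μ s ≠ 1) : μ s = 0 := by
  rcases hf.ae_empty_or_univ_of_ae_le_preimage hs hs' with h | h
  · simpa using measure_congr h
  · exact absurd (measure_congr h) (by simpa using h1)

theorem le_div_toReal_of_le_ofReal_div {a : ℝ≥0∞} {c m : ℝ} (ha : 0 < a) (ha' : a ≠ ∞)
    (hm : 0 < m) (h : a ≤ ENNReal.ofReal (c / m)) : m ≤ c / a.toReal := by
  have hcm : 0 < c / m := ENNReal.ofReal_pos.1 (ha.trans_le h)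
  have hle : a.toReal ≤ c / m := ENNReal.toReal_le_of_le_ofReal hcm.le h
  rw [le_div_iff₀ hm] at hle
  rw [le_div_iff₀ (ENNReal.toReal_pos ha.ne' ha')]
  linarith

section EventuallyAlwaysHitting

variable {X : Type*} {T : X → X} {B : ℕ → Set X}

def eahSetFrom (T : X → X) (B : ℕ → Set X) (n : ℕ) : Set X :=
  {x | ∀ k, n ≤ k → ∃ i < k, T^[i] x ∈ B k}

theorem monotone_eahSetFrom : Monotone (eahSetFrom T B) :=
  fun _ _ hab _ hx k hk => hx k (hab.trans hk)

theorem eahSet_eq_iUnion_eahSetFrom : eahSet T B = ⋃ n, eahSetFrom T B n := by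
  ext x
  simp [eahSet, eahSetFrom]

theorem measurableSet_eahSet [MeasurableSpace X] (hT : Measurable T)
    (hB : ∀ m, MeasurableSet (B m)) : MeasurableSet (eahSet T B) := by
  have hfrom (n : ℕ) :
      eahSetFrom T B n = ⋂ k, ⋂ _ : n ≤ k, ⋃ i, ⋃ _ : i < k, T^[i] ⁻¹' B k := by
    ext x
    simp [eahSetFrom]
  rw [eahSet_eq_iUnion_eahSetFrom]
  refine .iUnion fun n => ?_
  rw [hfrom]
  exact .iInter fun k => .iInter fun _ => .iUnion fun i => .iUnion fun _ =>
    (hB k).preimage (hT.iterate i)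

theorem eahSet_diff_iInter_subset_preimage (hB : Antitone B) :
    eahSet T B \ ⋂ m, B m ⊆ T ⁻¹' eahSet T B := by
  rintro x ⟨⟨m₀, hm₀⟩, hx⟩
  obtain ⟨M, hxM⟩ : ∃ M, x ∉ B M := by simpa using hx
  refine ⟨max m₀ M, fun k hk => ?_⟩
  obtain ⟨_ | i, hik, hiB⟩ := hm₀ (k + 1) (by omega)
  · exact absurd (hB (by omega : M ≤ k + 1) hiB) hxM
  · refine ⟨i, by omega, hB k.le_succ ?_⟩
    rwa [← Function.iterate_succ_apply]

theorem eahSet_ae_le_preimage [MeasurableSpace X] {μ : Measure X} (hB : Antitone B)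
    (h0 : μ (⋂ m, B m) = 0) : eahSet T B ≤ᵐ[μ] T ⁻¹' eahSet T B :=
  ae_le_set.2 <| measure_mono_null (sdiff_subset_iff.2 <| by
    simpa [union_comm] using eahSet_diff_iInter_subset_preimage (T := T) hB) h0

theorem eahSetFrom_subset_union_hitBy {n m : ℕ} {s : ℝ} (hnm : n ≤ m) (hs : (m : ℝ) - 1 ≤ s) :
    eahSetFrom T B n ⊆ B m ∪ hitBy T (B m) s := by
  intro x hx
  obtain ⟨_ | i, him, hiB⟩ := hx m hnm
  · exact Or.inl hiB
  · refine Or.inr ⟨i + 1, by omega, ?_, hiB⟩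
    have : ((i + 1 + 1 : ℕ) : ℝ) ≤ m := by exact_mod_cast him
    push_cast at this ⊢
    linarith

theorem measure_eahSet_lt_one [MeasurableSpace X] {μ : Measure X} (hpos : ∀ m, 0 < μ (B m))
    (hlim : Tendsto (fun m => μ (B m)) atTop (nhds 0)) {c : ℝ}
    (hG : limsup (fun m : ℕ => μ (hitBy T (B m) (c / (μ (B m)).toReal))) atTop < 1)
    (hc : ∃ᶠ m : ℕ in atTop, μ (B m) ≤ ENNReal.ofReal (c / m)) :
    μ (eahSet T B) < 1 := by
  have hsum :
      limsup (fun m : ℕ => μ (B m) + μ (hitBy T (B m) (c / (μ (B m)).toReal))) atTop < 1 := by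
    rwa [← Pi.add_def, ENNReal.limsup_add_of_left_tendsto_zero hlim]
  obtain ⟨η, hη, hη1⟩ := exists_between hsum
  have hle (n : ℕ) : μ (eahSetFrom T B n) ≤ η := by
    obtain ⟨m, hcm, hmη, hfin, hnm, hm1⟩ := (hc.and_eventually <|
      (eventually_lt_of_limsup_lt hη).and <| (hlim.eventually_ne ENNReal.zero_ne_top).and <|
        (eventually_ge_atTop n).and (eventually_ge_atTop 1)).exists
    have hmc : (m : ℝ) ≤ c / (μ (B m)).toReal :=
      le_div_toReal_of_le_ofReal_div (hpos m) hfin (by exact_mod_cast hm1) hcm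
    calc μ (eahSetFrom T B n)
        ≤ μ (B m ∪ hitBy T (B m) (c / (μ (B m)).toReal)) :=
          measure_mono (eahSetFrom_subset_union_hitBy hnm (by linarith))
      _ ≤ μ (B m) + μ (hitBy T (B m) (c / (μ (B m)).toReal)) := measure_union_le _ _
      _ ≤ η := hmη.le
  calc μ (eahSet T B) = ⨆ n, μ (eahSetFrom T B n) := by
        rw [eahSet_eq_iUnion_eahSetFrom, monotone_eahSetFrom.measure_iUnion]
    _ ≤ η := iSup_le hle
    _ < 1 := hη1

end EventuallyAlwaysHitting

/-- For an ergodic probability-measure-preserving system and a nested sequence of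
targets of positive measure tending to zero, assume that for every `t ∈ ℝ`,
`G(t) = limsup_m μ {x : τ_{B_m}(x) ≤ t / μ(B_m)} < 1`. If there is `c ∈ ℝ` with
`μ (B m) ≤ c / m` for infinitely many `m`, then the set of eventually always
hitting points has measure zero. -/
theorem eah_zero_sufficient_HTS {X : Type*} [MeasurableSpace X]
    (μ : Measure X) [IsProbabilityMeasure μ] (T : X → X) (hT : Ergodic T μ)
    (B : ℕ → Set X) (hmeas : ∀ m, MeasurableSet (B m))
    (hnested : ∀ m, B (m + 1) ⊆ B m)
    (hpos : ∀ m, 0 < μ (B m))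
    (hlim : Tendsto (fun m => μ (B m)) atTop (nhds 0))
    (hG : ∀ t : ℝ,
      Filter.limsup (fun m : ℕ => μ (hitBy T (B m) (t / (μ (B m)).toReal))) atTop < 1)
    (hc : ∃ c : ℝ, ∃ᶠ m : ℕ in atTop, μ (B m) ≤ ENNReal.ofReal (c / m)) :
    μ (eahSet T B) = 0 := by
  obtain ⟨c, hc⟩ := hc
  have hnull : μ (⋂ m, B m) = 0 :=
    le_antisymm (ge_of_tendsto' hlim fun m => measure_mono (iInter_subset _ m)) zero_le
  have hinv : eahSet T B ≤ᵐ[μ] T ⁻¹' eahSet T B :=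
    eahSet_ae_le_preimage (antitone_nat_of_succ_le hnested) hnull
  exact hT.measure_eq_zero_of_ae_le_preimage
    (measurableSet_eahSet hT.measurable hmeas).nullMeasurableSet hinv
    (measure_eahSet_lt_one hpos hlim (hG c) hc).ne
end
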